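/- Let p be an odd prime and let r, s be integers with 0 < r, s < p and r + s ≠ p. Then the polynomial identity b_{r,s}(α) = ∑_{k=0}^{p−1} (−r/s)^k C(rα−1, p−1−k) C(sα, k) holds in F_p[α]; that is, the defining sum for b_{r,s}(α) is unchanged when C(sα−1, k) is replaced by C(sα, k) in every term. -/

import Mathlib

/-!
Write `P_n(a, b) = ∑ₖ C(n, k) xᵏ (a)_{n-k} (b)_k` with falling factorials `(·)_m`, so that
`b_{r,s} = P_{p-1}(a, b) / (p-1)!` for `x = -r/s`, `a = rα - 1`, `b = sα - 1`. Since
`(b+1)_k = (b)_k + k (b)_{k-1}`, replacing `b` by `b + 1` adds `(p-1) x P_{p-2}(a, b)`, so it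
suffices that `P_{p-2}(a, b) = 0`. Pascal's rule and `(a+1)_{m+1} = (a+1) (a)_m` give
`P_p(a+1, b+1) = (a + 1 + x(b+1)) P_{p-1}(a, b) + (p-1) x (a + b + 2) P_{p-2}(a, b)`.
In characteristic `p` only the extreme terms of `P_p` survive and `(c)_p = c^p - c`; with
`a + 1 = rα`, `b + 1 = sα` and `r + xs = 0`, both `P_p(a+1, b+1)` and `a + 1 + x(b+1)` vanish,
leaving `-x (r+s) α P_{p-2}(a, b) = 0`.
-/

noncomputable def binomF {K : Type*} [Field K] (f : K) (m : ℕ) : K :=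
  Polynomial.eval f (descPochhammer K m) / (m.factorial : K)

noncomputable def bPoly (p : ℕ) [Fact p.Prime] (r s : ℕ) : Polynomial (ZMod p) :=
  ∑ k ∈ Finset.range p,
    Polynomial.C ((-(r : ZMod p) / (s : ZMod p)) ^ k /
        (((p - 1 - k).factorial : ZMod p) * (k.factorial : ZMod p))) *
      Polynomial.eval (Polynomial.C (r : ZMod p) * Polynomial.X - 1)
        (descPochhammer (Polynomial (ZMod p)) (p - 1 - k)) *
      Polynomial.eval (Polynomial.C (s : ZMod p) * Polynomial.X - 1)
        (descPochhammer (Polynomial (ZMod p)) k)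

open Polynomial Finset Nat

section

variable {R : Type*} [CommRing R]

noncomputable def twistedVandermonde (x a b : R) (n : ℕ) : R :=
  ∑ k ∈ range (n + 1),
    (n.choose k : R) * (x ^ k * (descPochhammer R (n - k)).eval a * (descPochhammer R k).eval b)

theorem descPochhammer_eval_add_one (a : R) (m : ℕ) :
    (descPochhammer R (m + 1)).eval (a + 1) =
      (descPochhammer R (m + 1)).eval a + (m + 1) * (descPochhammer R m).eval a := by
  rw [descPochhammer_succ_eval m a, descPochhammer_succ_left]
  simp only [eval_mul, eval_X, eval_comp, eval_sub, eval_one, add_sub_cancel_right]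
  ring

theorem descPochhammer_succ_eval_add_one (a : R) (m : ℕ) :
    (descPochhammer R (m + 1)).eval (a + 1) = (a + 1) * (descPochhammer R m).eval a := by
  simp [descPochhammer_succ_left, eval_comp]

variable (x a b : R) (n : ℕ)

theorem twistedVandermonde_add_one_left :
    twistedVandermonde x (a + 1) b (n + 1) =
      twistedVandermonde x a b (n + 1) + (n + 1) * twistedVandermonde x a b n := by
  rw [twistedVandermonde, twistedVandermonde, twistedVandermonde, sum_range_succ,
    sum_range_succ _ (n + 1), Nat.sub_self, mul_sum, add_right_comm, ← sum_add_distrib]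
  congr 1
  · refine sum_congr rfl fun k hk => ?_
    have hsub : n + 1 - k = n - k + 1 := by grind
    rw [hsub, descPochhammer_eval_add_one]
    have := congrArg (Nat.cast : ℕ → R) (Nat.choose_mul_succ_eq n k)
    push_cast [hsub] at this
    linear_combination
      -x ^ k * (descPochhammer R (n - k)).eval a * (descPochhammer R k).eval b * this
  · rw [descPochhammer_zero, eval_one, eval_one]

theorem twistedVandermonde_add_one_right :
    twistedVandermonde x a (b + 1) (n + 1) =
      twistedVandermonde x a b (n + 1) + (n + 1) * x * twistedVandermonde x a b n := by
  rw [twistedVandermonde, twistedVandermonde, twistedVandermonde, sum_range_succ',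
    sum_range_succ' _ (n + 1), mul_sum, add_right_comm, ← sum_add_distrib]
  congr 1
  · refine sum_congr rfl fun k _ => ?_
    rw [descPochhammer_eval_add_one, Nat.add_sub_add_right]
    have := congrArg (Nat.cast : ℕ → R) (Nat.add_one_mul_choose_eq n k)
    push_cast at this
    linear_combination
      -x ^ (k + 1) * (descPochhammer R (n - k)).eval a * (descPochhammer R k).eval b * this
  · rw [descPochhammer_zero, eval_one, eval_one]

theorem twistedVandermonde_succ_add_one_add_one :
    twistedVandermonde x (a + 1) (b + 1) (n + 1) =
      (a + 1) * twistedVandermonde x a (b + 1) n +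
        x * (b + 1) * twistedVandermonde x (a + 1) b n := by
  rw [twistedVandermonde, sum_choose_succ_mul
    (fun i j => x ^ i * (descPochhammer R j).eval (a + 1) * (descPochhammer R i).eval (b + 1)),
    twistedVandermonde, twistedVandermonde, mul_sum, mul_sum]
  congr 1 <;> refine sum_congr rfl fun k hk => ?_
  · rw [show n + 1 - k = n - k + 1 by grind, descPochhammer_succ_eval_add_one]
    ring
  · rw [descPochhammer_succ_eval_add_one b]
    ring

theorem twistedVandermonde_recurrence :
    twistedVandermonde x (a + 1) (b + 1) (n + 2) =
      (a + 1 + x * (b + 1)) * twistedVandermonde x a b (n + 1) +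
        (n + 1) * x * (a + b + 2) * twistedVandermonde x a b n := by
  rw [twistedVandermonde_succ_add_one_add_one, twistedVandermonde_add_one_left,
    twistedVandermonde_add_one_right]
  ring

end

theorem descPochhammer_zmod_eq_X_pow_sub_X (p : ℕ) [Fact p.Prime] :
    descPochhammer (ZMod p) p = X ^ p - X := by
  have hp : 1 < p := (Fact.out : p.Prime).one_lt
  have hmonic : (X ^ p - X : (ZMod p)[X]).Monic := monic_X_pow_sub (by simpa using hp)
  have hroots := FiniteField.roots_X_pow_card_sub_X (ZMod p)
  rw [ZMod.card] at hroots
  refine eq_of_monic_of_dvd_of_natDegree_le hmonic (monic_descPochhammer _ _) ?_ ?_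
  · rw [← prod_multiset_X_sub_C_of_monic_of_roots_card_eq hmonic (by
        rw [hroots, FiniteField.X_pow_card_sub_X_natDegree_eq _ hp]; simp), hroots,
      Multiset.prod_X_sub_C_dvd_iff_le_roots (monic_descPochhammer _ _).ne_zero,
      Multiset.le_iff_subset univ.nodup]
    intro c _
    rw [mem_roots (monic_descPochhammer _ _).ne_zero, IsRoot.def, ← ZMod.natCast_zmod_val c]
    exact descPochhammer_eval_coe_nat_of_lt (ZMod.val_lt c)
  · rw [descPochhammer_natDegree, FiniteField.X_pow_card_sub_X_natDegree_eq _ hp]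

theorem descPochhammer_eq_X_pow_sub_X (p : ℕ) [Fact p.Prime] (R : Type*) [CommRing R]
    [CharP R p] : descPochhammer R p = X ^ p - X := by
  rw [← descPochhammer_map (ZMod.castHom (dvd_refl p) R), descPochhammer_zmod_eq_X_pow_sub_X]
  simp

theorem twistedVandermonde_charP {R : Type*} [CommRing R] (p : ℕ) [Fact p.Prime] [CharP R p]
    (x a b : R) : twistedVandermonde x a b p = a ^ p - a + x ^ p * (b ^ p - b) := by
  have hp : p.Prime := Fact.out
  rw [twistedVandermonde, sum_range_succ, sum_eq_single_of_mem 0 (by simp [hp.pos])]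
  · simp [descPochhammer_eq_X_pow_sub_X p R]
  · intro k hk hk0
    rw [(CharP.cast_eq_zero_iff R p _).2 (hp.dvd_choose_self hk0 (by simpa using hk)), zero_mul]

theorem twistedVandermonde_eq_zero (p : ℕ) [Fact p.Prime] {n : ℕ} (hn : p = n + 2)
    {x r s : ZMod p} (hx : x ≠ 0) (hxs : r + x * s = 0) (hrs : r + s ≠ 0) :
    twistedVandermonde (C x) (C r * X - 1) (C s * X - 1) n = 0 := by
  have h := twistedVandermonde_recurrence (C x) (C r * X - 1) (C s * X - 1) n
  have hpow (c : ZMod p) : C c ^ p = C c := by rw [← map_pow, ZMod.pow_card]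
  rw [sub_add_cancel, sub_add_cancel, ← hn, twistedVandermonde_charP p] at h
  simp only [mul_pow, hpow] at h
  have hxsC : C r + C x * C s = 0 := by rw [← map_mul, ← map_add, hxs, map_zero]
  have hn2 : (n : (ZMod p)[X]) + 2 = 0 := by
    have : ((n + 2 : ℕ) : (ZMod p)[X]) = 0 := by rw [← hn]; exact CharP.cast_eq_zero _ p
    exact_mod_cast this
  set V := twistedVandermonde (C x) (C r * X - 1) (C s * X - 1) n
  set W := twistedVandermonde (C x) (C r * X - 1) (C s * X - 1) (n + 1)
  have key : C x * (C r + C s) * X * V = 0 := by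
    linear_combination C x * (C r + C s) * X * V * hn2 + h - (X ^ p - X - X * W) * hxsC
  have hrsC : C r + C s ≠ 0 := by rw [← map_add]; exact C_ne_zero.2 hrs
  simpa [hx, hrsC, X_ne_zero] using key

theorem sum_pow_div_factorial_mul_eq_twistedVandermonde {K : Type*} [Field K] {n : ℕ}
    (hn : (n ! : K) ≠ 0) (x : K) (A B : K[X]) :
    ∑ k ∈ range (n + 1), C (x ^ k / (((n - k)! : K) * (k ! : K))) *
        (descPochhammer K[X] (n - k)).eval A * (descPochhammer K[X] k).eval B =
      C (n ! : K)⁻¹ * twistedVandermonde (C x) A B n := by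
  rw [twistedVandermonde, mul_sum]
  refine sum_congr rfl fun k hk => ?_
  have h := congrArg (Nat.cast : ℕ → K) (Nat.choose_mul_factorial_mul_factorial (k := k)
    (by simpa [Nat.lt_succ_iff] using hk))
  push_cast at h
  have hkf : (k ! : K) ≠ 0 := fun h0 => hn (by rw [← h, h0]; ring)
  have hnkf : ((n - k)! : K) ≠ 0 := fun h0 => hn (by rw [← h, h0]; ring)
  have hcoef : x ^ k / (((n - k)! : K) * (k ! : K)) = (n ! : K)⁻¹ * (n.choose k * x ^ k) := by
    field_simp
    linear_combination -x ^ k * h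
  rw [hcoef, map_mul, map_mul, map_pow, map_natCast]
  ring

theorem stmt19_general (p r s : ℕ) [Fact p.Prime]
    (hr0 : 0 < r) (hrp : r < p) (hs0 : 0 < s) (hsp : s < p) (hrs : r + s ≠ p) :
    bPoly p r s =
      ∑ k ∈ Finset.range p,
        Polynomial.C ((-(r : ZMod p) / (s : ZMod p)) ^ k /
            (((p - 1 - k).factorial : ZMod p) * (k.factorial : ZMod p))) *
          Polynomial.eval (Polynomial.C (r : ZMod p) * Polynomial.X - 1)
            (descPochhammer (Polynomial (ZMod p)) (p - 1 - k)) *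
          Polynomial.eval (Polynomial.C (s : ZMod p) * Polynomial.X)
            (descPochhammer (Polynomial (ZMod p)) k) := by
  have hp2 := (Fact.out : p.Prime).two_le
  obtain ⟨n, hn⟩ : ∃ n, p = n + 2 := ⟨p - 2, by omega⟩
  have hr : (r : ZMod p) ≠ 0 := by
    rw [Ne, ZMod.natCast_eq_zero_iff]; exact Nat.not_dvd_of_pos_of_lt hr0 hrp
  have hs : (s : ZMod p) ≠ 0 := by
    rw [Ne, ZMod.natCast_eq_zero_iff]; exact Nat.not_dvd_of_pos_of_lt hs0 hsp
  have hrs_ne : (r : ZMod p) + s ≠ 0 := by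
    rw [← Nat.cast_add, Ne, ZMod.natCast_eq_zero_iff]
    rintro ⟨c, hc⟩
    rcases c with _ | _ | c <;> grind
  have hfac : ((n + 1)! : ZMod p) ≠ 0 := by
    rw [show n + 1 = p - 1 by omega, ZMod.wilsons_lemma]; exact neg_ne_zero.2 one_ne_zero
  have hV := twistedVandermonde_eq_zero p hn (div_ne_zero (neg_ne_zero.2 hr) hs)
    (by field_simp; ring) hrs_ne
  conv_rhs => rw [← sub_add_cancel (C (s : ZMod p) * X) 1]
  rw [bPoly, show range p = range (n + 1 + 1) by rw [hn], show p - 1 = n + 1 by omega,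
    sum_pow_div_factorial_mul_eq_twistedVandermonde hfac,
    sum_pow_div_factorial_mul_eq_twistedVandermonde hfac, twistedVandermonde_add_one_right, hV,
    mul_zero, add_zero]

theorem stmt19 (p r s : ℕ) [Fact p.Prime] (hodd : Odd p)
    (hr0 : 0 < r) (hrp : r < p) (hs0 : 0 < s) (hsp : s < p) (hrs : r + s ≠ p) :
    bPoly p r s =
      ∑ k ∈ Finset.range p,
        Polynomial.C ((-(r : ZMod p) / (s : ZMod p)) ^ k /
            (((p - 1 - k).factorial : ZMod p) * (k.factorial : ZMod p))) *
          Polynomial.eval (Polynomial.C (r : ZMod p) * Polynomial.X - 1)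
            (descPochhammer (Polynomial (ZMod p)) (p - 1 - k)) *
          Polynomial.eval (Polynomial.C (s : ZMod p) * Polynomial.X)
            (descPochhammer (Polynomial (ZMod p)) k) :=
  stmt19_general p r s hr0 hrp hs0 hsp hrs
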